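/- arXiv:1904.02416 — 3 statements merged into one kernel-verified Lean document; each statement's English description precedes it below -/
import Mathlib

section
/- Consider a two-sender instance over a finite field F with message parts P_1, P_2, P_{12} partitioning [m], side-information sets K_i, and eavesdropper set A. Partition P_{12} into two disjoint sets P_{12}^{(1)} and P_{12}^{(2)}, and set S̃_j = P_j ∪ P_{12}^{(j)} and Ã_j = A ∩ S̃_j for j ∈ {1,2}. Suppose for each j ∈ {1,2} there is a matrix G̃_j ∈ F^{l_j×|S̃_j|} that is a valid index code for the sub-instance induced on S̃_j (side-information sets K_i ∩ S̃_j for i ∈ S̃_j) and is weakly secure against Ã_j. Then the matrix G whose first l_1 rows are supported on the columns S̃_1 (equal to G̃_1 there, zero elsewhere) and whose last l_2 rows are supported on the columns S̃_2 (equal to G̃_2 there, zero elsewhere) is a valid two-sender linear index code for the full instance (sender 1 transmits the first l_1 rows, sender 2 the last l_2 rows) and is weakly secure against A. -/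
open Matrix Sum

attribute [local instance] Classical.propDecidable

noncomputable section

variable (F : Type*) [Field F] [Fintype F]

/-- The row space of a matrix: the span of its rows. -/
def rowSpace {ρ ι : Type*} (G : Matrix ρ ι F) : Submodule F (ι → F) :=
  Submodule.span F (Set.range fun r j => G r j)

/-- Weak security of the linear code `x ↦ G x` against an eavesdropper knowing `x j` for
`j ∈ A`: for every `i ∉ A` and every `u` supported in `A`, `u + e i` is not in the
row space of `G`. -/
def WeaklySecure {ρ ι : Type*} (G : Matrix ρ ι F) (A : Set ι) : Prop :=
  ∀ i ∉ A, ∀ u : ι → F, (∀ j, u j ≠ 0 → j ∈ A) →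
    u + Pi.single i (1 : F) ∉ rowSpace F G

/-- `G` is a valid index code for side-information sets `K`: every receiver `i` can
decode `x i` from the codeword `G.mulVec x` and its side information `x|_{K i}`. -/
def ValidCode {ρ ι : Type*} [Fintype ι] (K : ι → Set ι) (G : Matrix ρ ι F) : Prop :=
  ∀ i : ι, ∃ D : (ρ → F) → (↥(K i) → F) → F,
    ∀ x : ι → F, D (G.mulVec x) (fun j => x j.1) = x i

/-- `G` has two-sender form for the parts `P1`, `P2`: its rows split into sender-1 rows,
zero on all columns in `P2`, and sender-2 rows, zero on all columns in `P1`. -/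
def TwoSenderForm {ρ ι : Type*} (P1 P2 : Set ι) (G : Matrix ρ ι F) : Prop :=
  ∃ S : Set ρ, (∀ r ∈ S, ∀ j ∈ P2, G r j = 0) ∧ (∀ r ∉ S, ∀ j ∈ P1, G r j = 0)

/-- Achievable lengths of valid weakly secure (single-sender) linear index codes. -/
def oneLens {ι : Type*} [Fintype ι] (K : ι → Set ι) (A : Set ι) : Set ℕ :=
  {l | ∃ G : Matrix (Fin l) ι F, ValidCode F K G ∧ WeaklySecure F G A}

/-- Achievable total lengths of valid weakly secure two-sender linear index codes. -/
def twoLens {ι : Type*} [Fintype ι] (P1 P2 : Set ι) (K : ι → Set ι) (A : Set ι) :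
    Set ℕ :=
  {l | ∃ G : Matrix (Fin l) ι F,
      TwoSenderForm F P1 P2 G ∧ ValidCode F K G ∧ WeaklySecure F G A}

/-- Side-information sets of the sub-instance induced on `S`. -/
def subK {ι : Type*} (K : ι → Set ι) (S : Set ι) : ↥S → Set ↥S :=
  fun i => {j : ↥S | (j : ι) ∈ K (i : ι)}

/-- Extend a matrix with columns indexed by `↥S` to one with columns indexed by `ι`,
filling the new columns with zeros. -/
def extendCols {ρ ι : Type*} (S : Set ι) (G : Matrix ρ ↥S F) : Matrix ρ ι F :=
  Matrix.of fun r => Function.extend (Subtype.val) (G r) (fun _ => 0)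

/-- Zero-pad a matrix with `l` rows to one with `L` rows. -/
def padMat {ι : Type*} (L : ℕ) {l : ℕ} (G : Matrix (Fin l) ι F) : Matrix (Fin L) ι F :=
  Matrix.of fun r j => if h : (r : ℕ) < l then G ⟨(r : ℕ), h⟩ j else 0

/-- Glue two codes on column sets `S1`, `S2` into a single matrix on all columns,
each block of rows supported only on its own column set. -/
def glueTwo {ρ1 ρ2 ι : Type*} (S1 S2 : Set ι)
    (G1 : Matrix ρ1 ↥S1 F) (G2 : Matrix ρ2 ↥S2 F) : Matrix (ρ1 ⊕ ρ2) ι F :=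
  Matrix.of (Sum.elim (fun r => extendCols F S1 G1 r) (fun r => extendCols F S2 G2 r))

/-! The sets `S̃1`, `S̃2` cover `[m]`, and a receiver `i ∈ S̃j` decodes from sender `j`'s
rows alone, which are `G̃j` applied to `x|_{S̃j}`. Since `S̃1` and `S̃2` are disjoint,
restricting to `S̃j` maps the row space of the glued code into that of `G̃j` and maps
`u + e i` (with `u` supported in `A`) to a vector of the same shape for the sub-instance,
so weak security is inherited. -/

section

omit [Fintype F]
variable {F} {ρ ρ₁ ρ₂ ι : Type*}

@[simp]
theorem extendCols_apply_coe {S : Set ι} (G : Matrix ρ S F) (r : ρ) (j : S) :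
    extendCols F S G r j = G r j := by
  rw [extendCols, of_apply]
  exact Subtype.val_injective.extend_apply (G r) _ j

theorem extendCols_apply_of_notMem {S : Set ι} (G : Matrix ρ S F) (r : ρ) {j : ι}
    (hj : j ∉ S) : extendCols F S G r j = 0 := by
  rw [extendCols, of_apply]
  exact Function.extend_apply' _ _ _ fun ⟨a, ha⟩ => hj (ha ▸ a.2)

theorem extendCols_restrict_of_disjoint {S T : Set ι} (hST : Disjoint S T)
    (G : Matrix ρ T F) (r : ρ) : (fun j : S => extendCols F T G r j) = 0 :=
  funext fun j => extendCols_apply_of_notMem G r (hST.notMem_of_mem_left j.2)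

theorem extendCols_mulVec [Fintype ι] {S : Set ι} [Fintype S] (G : Matrix ρ S F) (x : ι → F) :
    (extendCols F S G).mulVec x = G.mulVec fun j : S => x j := by
  classical
  funext r
  have hout : ∑ j : {j // j ∉ S}, extendCols F S G r j * x j = 0 :=
    Finset.sum_eq_zero fun j _ => by rw [extendCols_apply_of_notMem G r j.2, zero_mul]
  rw [mulVec, mulVec, dotProduct, dotProduct,
    ← Fintype.sum_subtype_add_sum_subtype (· ∈ S), hout, add_zero]
  simp only [extendCols_apply_coe]
  convert rfl

theorem funLeft_subtypeVal_single {S : Set ι} {i : ι} (hi : i ∈ S) (a : F) :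
    LinearMap.funLeft F F Subtype.val (Pi.single i a) = Pi.single (⟨i, hi⟩ : S) a := by
  funext j
  simp [LinearMap.funLeft, Pi.single_apply, Subtype.ext_iff]

theorem ValidCode.exists_decoder_of_factor [Fintype ι] {K : ι → Set ι} {S : Set ι} [Fintype S]
    {G₁ : Matrix ρ₁ S F} (hv : ValidCode F (subK K S) G₁) (G : Matrix ρ ι F)
    (π : (ρ → F) → ρ₁ → F) (hπ : ∀ x, π (G.mulVec x) = G₁.mulVec fun j : S => x j)
    {i : ι} (hi : i ∈ S) :
    ∃ D : (ρ → F) → (K i → F) → F, ∀ x, D (G.mulVec x) (fun j => x j.1) = x i := by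
  obtain ⟨D, hD⟩ := hv ⟨i, hi⟩
  refine ⟨fun c k => D (π c) fun j => k ⟨j, j.2⟩, fun x => ?_⟩
  simp only [hπ]
  exact hD _

theorem WeaklySecure.add_single_notMem_of_le_comap {S A : Set ι} {G : Matrix ρ ι F}
    {G₁ : Matrix ρ₁ S F} (hs : WeaklySecure F G₁ (Subtype.val ⁻¹' A))
    (hle : rowSpace F G ≤ (rowSpace F G₁).comap (LinearMap.funLeft F F Subtype.val))
    {i : ι} (hiS : i ∈ S) (hiA : i ∉ A) {u : ι → F} (hu : ∀ j, u j ≠ 0 → j ∈ A) :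
    u + Pi.single i 1 ∉ rowSpace F G := fun hmem => by
  have h := Submodule.mem_comap.1 (hle hmem)
  rw [map_add, funLeft_subtypeVal_single hiS] at h
  exact hs ⟨i, hiS⟩ hiA (LinearMap.funLeft F F Subtype.val u) (fun j => hu j) (by convert h)

variable {S₁ S₂ : Set ι} (G₁ : Matrix ρ₁ S₁ F) (G₂ : Matrix ρ₂ S₂ F)

@[simp]
theorem glueTwo_inl (r : ρ₁) : glueTwo F S₁ S₂ G₁ G₂ (.inl r) = extendCols F S₁ G₁ r := rfl

@[simp]
theorem glueTwo_inr (r : ρ₂) : glueTwo F S₁ S₂ G₁ G₂ (.inr r) = extendCols F S₂ G₂ r := rfl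

theorem glueTwo_mulVec_inl [Fintype ι] [Fintype S₁] (x : ι → F) (r : ρ₁) :
    (glueTwo F S₁ S₂ G₁ G₂).mulVec x (.inl r) = G₁.mulVec (fun j : S₁ => x j) r := by
  rw [← extendCols_mulVec]
  rfl

theorem glueTwo_mulVec_inr [Fintype ι] [Fintype S₂] (x : ι → F) (r : ρ₂) :
    (glueTwo F S₁ S₂ G₁ G₂).mulVec x (.inr r) = G₂.mulVec (fun j : S₂ => x j) r := by
  rw [← extendCols_mulVec]
  rfl

theorem rowSpace_glueTwo_comm :
    rowSpace F (glueTwo F S₁ S₂ G₁ G₂) = rowSpace F (glueTwo F S₂ S₁ G₂ G₁) := by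
  simp only [rowSpace, glueTwo, of_apply, Set.Sum.elim_range, Set.union_comm]

theorem rowSpace_glueTwo_le_comap (hS : Disjoint S₁ S₂) :
    rowSpace F (glueTwo F S₁ S₂ G₁ G₂) ≤
      (rowSpace F G₁).comap (LinearMap.funLeft F F Subtype.val) := by
  rw [rowSpace, Submodule.span_le]
  rintro _ ⟨r | r, rfl⟩
  · refine Submodule.subset_span ⟨r, ?_⟩
    funext j
    simp [LinearMap.funLeft]
  · have h0 := extendCols_restrict_of_disjoint hS G₂ r
    simp [LinearMap.funLeft, Function.comp_def, h0]

end

theorem glueTwo_validCode_and_weaklySecure {m l1 l2 : ℕ}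
    (P1 P2 P12 Q1 Q2 : Set (Fin m))
    (h12 : Disjoint P1 P2) (h112 : Disjoint P1 P12) (h212 : Disjoint P2 P12)
    (hcov : P1 ∪ P2 ∪ P12 = Set.univ)
    (hQd : Disjoint Q1 Q2) (hQu : Q1 ∪ Q2 = P12)
    (K : Fin m → Set (Fin m))
    (A : Set (Fin m))
    (G1 : Matrix (Fin l1) ↥(P1 ∪ Q1) F) (G2 : Matrix (Fin l2) ↥(P2 ∪ Q2) F)
    (hG1v : ValidCode F (subK K (P1 ∪ Q1)) G1)
    (hG1s : WeaklySecure F G1 (Subtype.val ⁻¹' A))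
    (hG2v : ValidCode F (subK K (P2 ∪ Q2)) G2)
    (hG2s : WeaklySecure F G2 (Subtype.val ⁻¹' A)) :
    (∀ r : Fin l1, ∀ j ∈ P2, glueTwo F (P1 ∪ Q1) (P2 ∪ Q2) G1 G2 (Sum.inl r) j = 0) ∧
    (∀ r : Fin l2, ∀ j ∈ P1, glueTwo F (P1 ∪ Q1) (P2 ∪ Q2) G1 G2 (Sum.inr r) j = 0) ∧
    ValidCode F K (glueTwo F (P1 ∪ Q1) (P2 ∪ Q2) G1 G2) ∧
    WeaklySecure F (glueTwo F (P1 ∪ Q1) (P2 ∪ Q2) G1 G2) A := by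
  subst hQu
  have hS : Disjoint (P1 ∪ Q1) (P2 ∪ Q2) := by
    simp only [Set.disjoint_union_left, Set.disjoint_union_right] at h112 h212 ⊢
    exact ⟨⟨h12, h212.1.symm⟩, ⟨h112.2, hQd⟩⟩
  have hcover : ∀ j, j ∈ P1 ∪ Q1 ∨ j ∈ P2 ∪ Q2 := fun j => by
    have hj : j ∈ P1 ∪ P2 ∪ (Q1 ∪ Q2) := hcov ▸ Set.mem_univ j
    simp only [Set.mem_union] at hj ⊢
    tauto
  refine ⟨fun r j hj => extendCols_apply_of_notMem G1 r (hS.notMem_of_mem_right (.inl hj)),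
    fun r j hj => extendCols_apply_of_notMem G2 r (hS.notMem_of_mem_left (.inl hj)),
    fun i => ?_, fun i hiA u hu => ?_⟩
  · rcases hcover i with hi | hi
    · exact hG1v.exists_decoder_of_factor _ (fun c r => c (.inl r))
        (fun x => funext (glueTwo_mulVec_inl G1 G2 x)) hi
    · exact hG2v.exists_decoder_of_factor _ (fun c r => c (.inr r))
        (fun x => funext (glueTwo_mulVec_inr G1 G2 x)) hi
  · rcases hcover i with hi | hi
    · exact hG1s.add_single_notMem_of_le_comap (rowSpace_glueTwo_le_comap G1 G2 hS) hi hiA hu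
    · refine hG2s.add_single_notMem_of_le_comap ?_ hi hiA hu
      exact rowSpace_glueTwo_comm G1 G2 ▸ rowSpace_glueTwo_le_comap G2 G1 hS.symm
end
end

section
/- Consider a two-sender instance over a finite field F in which the common part is empty, P_{12} = ∅, so [m] = P_1 ∪ P_2, with arbitrary side-information sets K_i ⊆ [m]\{i} (possibly containing cross indices) and eavesdropper set A = A_1 ∪ A_2 with A_j = A ∩ P_j. For j ∈ {1,2} let l*_j be the minimal length of a valid weakly secure single-sender linear code over F for the sub-instance induced on P_j (side-information K_i ∩ P_j for i ∈ P_j, eavesdropper A_j), assumed to exist. Then the optimal two-sender codelength satisfies l* = l*_1 + l*_2; i.e., cross side information gives no advantage when each sender's transmission can depend only on its own exclusive messages. -/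
open Matrix Sum

attribute [local instance] Classical.propDecidable

noncomputable section

variable (F : Type*) [Field F] [Fintype F]

/-!
Up to reordering its rows, a two-sender code with empty common part is a stack of a sender-1
block supported on the columns `P1` and a sender-2 block supported on `P2`. Restricted to its
columns, each block is a valid weakly secure code for its sub-instance: messages outside `P_j` may
be set to zero when decoding, and a leak for the sub-instance extends by zero to a leak for the
whole code. Conversely, stacking codes for the two sub-instances, padded with zero columns, gives
a valid weakly secure two-sender code: the other block vanishes on `P_j`, so a vector in the row
space of the stack restricts on `P_j` to one in the row space of block `j`.
Hence the achievable two-sender lengths form the sumset of the achievable single-sender lengths,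
and the least element of a sumset in `ℕ` is the sum of the least elements.
-/

section

variable {𝕜 ι ρ ρ' : Type*} [Field 𝕜]

lemma extend_val_apply_of_notMem {P : Set ι} (x : ↥P → 𝕜) {j : ι} (hj : j ∉ P) :
    Function.extend Subtype.val x 0 j = 0 :=
  Function.extend_apply' _ _ _ (by rintro ⟨a, rfl⟩; exact hj a.2)

lemma extend_val_comp_val {P : Set ι} {v : ι → 𝕜} (hv : ∀ j ∉ P, v j = 0) :
    Function.extend Subtype.val (v ∘ (Subtype.val : ↥P → ι)) 0 = v := by
  funext j
  by_cases hj : j ∈ P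
  · exact Subtype.val_injective.extend_apply _ _ ⟨j, hj⟩
  · rw [extend_val_apply_of_notMem _ hj, hv j hj]

lemma extend_val_comp_val_of_disjoint {P Q : Set ι} (hd : Disjoint P Q) (x : ↥P → 𝕜) :
    Function.extend Subtype.val x 0 ∘ (Subtype.val : ↥Q → ι) = 0 :=
  funext fun j => extend_val_apply_of_notMem x (Set.disjoint_right.1 hd j.2)

lemma extendCols_apply (P : Set ι) (G : Matrix ρ ↥P 𝕜) (r : ρ) :
    extendCols 𝕜 P G r = Function.extend Subtype.val (G r) 0 :=
  rfl

lemma mulVec_extend_val [Fintype ι] (G : Matrix ρ ι 𝕜) (P : Set ι) (x : ↥P → 𝕜) :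
    G *ᵥ Function.extend Subtype.val x 0 = G.submatrix id Subtype.val *ᵥ x := by
  funext r
  refine (Fintype.sum_of_injective _ Subtype.val_injective _ _ (fun j hj => ?_) fun j => ?_).symm
  · rw [Function.extend_apply' _ _ _ hj, Pi.zero_apply, mul_zero]
  · rw [Subtype.val_injective.extend_apply]; rfl

lemma extendCols_mulVec_s13 [Fintype ι] (P : Set ι) (G : Matrix ρ ↥P 𝕜) (x : ι → 𝕜) :
    extendCols 𝕜 P G *ᵥ x = G *ᵥ (x ∘ Subtype.val) := by
  funext r
  refine (Fintype.sum_of_injective _ Subtype.val_injective _ _ (fun j hj => ?_) fun j => ?_).symm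
  · simp only [extendCols_apply, Function.extend_apply' _ _ _ hj, Pi.zero_apply, zero_mul]
  · simp only [extendCols_apply, Subtype.val_injective.extend_apply, Function.comp_apply]

/-- `ValidCode 𝕜 K G` unfolds to `∀ i, Decodes K G i`. -/
def Decodes [Fintype ι] (K : ι → Set ι) (G : Matrix ρ ι 𝕜) (i : ι) : Prop :=
  ∃ D : (ρ → 𝕜) → (↥(K i) → 𝕜) → 𝕜, ∀ x : ι → 𝕜, D (G *ᵥ x) (fun j => x j.1) = x i

section Decoding

variable [Fintype ι] {K : ι → Set ι}

lemma Decodes.of_mulVec_factor {G : Matrix ρ ι 𝕜} {G' : Matrix ρ' ι 𝕜} {i : ι}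
    (f : (ρ' → 𝕜) → ρ → 𝕜) (hf : ∀ x, f (G' *ᵥ x) = G *ᵥ x) (h : Decodes K G i) :
    Decodes K G' i := by
  obtain ⟨D, hD⟩ := h
  exact ⟨fun c => D (f c), fun x => by simpa only [hf] using hD x⟩

lemma ValidCode.submatrix_rows {G : Matrix ρ ι 𝕜} (hv : ValidCode 𝕜 K G) (e : ρ' → ρ)
    (he : e.Injective) (hzero : ∀ r ∉ Set.range e, ∀ j, G r j = 0) :
    ValidCode 𝕜 K (G.submatrix e id) := by
  refine fun i => Decodes.of_mulVec_factor (fun c => Function.extend e c 0)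
    (fun x => funext fun r => ?_) (hv i)
  by_cases hr : r ∈ Set.range e
  · obtain ⟨r', rfl⟩ := hr
    exact he.extend_apply _ _ r'
  · rw [Function.extend_apply' _ _ _ hr]
    simp [Matrix.mulVec, dotProduct, hzero r hr]

lemma ValidCode.submatrix_cols_val {G : Matrix ρ ι 𝕜} (hv : ValidCode 𝕜 K G) (P : Set ι) :
    ValidCode 𝕜 (subK K P) (G.submatrix id (Subtype.val : ↥P → ι)) := by
  intro i
  obtain ⟨D, hD⟩ := hv i
  refine ⟨fun c s => D c fun j => if h : j.1 ∈ P then s ⟨⟨j.1, h⟩, j.2⟩ else 0, fun x => ?_⟩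
  have hside : (fun j : ↥(K i) => Function.extend Subtype.val x 0 j.1) =
      fun j : ↥(K i) => if h : j.1 ∈ P then x ⟨j.1, h⟩ else 0 := by
    funext j
    split_ifs with h
    · exact Subtype.val_injective.extend_apply _ _ ⟨j.1, h⟩
    · exact extend_val_apply_of_notMem _ h
  have := hD (Function.extend Subtype.val x 0)
  rwa [mulVec_extend_val, hside, Subtype.val_injective.extend_apply] at this

lemma decodes_extendCols {P : Set ι} {G : Matrix ρ ↥P 𝕜} (hv : ValidCode 𝕜 (subK K P) G)
    {i : ι} (hi : i ∈ P) : Decodes K (extendCols 𝕜 P G) i := by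
  obtain ⟨D, hD⟩ := hv ⟨i, hi⟩
  exact ⟨fun c s => D c fun j => s ⟨j.1, j.2⟩, fun x => by rw [extendCols_mulVec_s13]; exact hD _⟩

end Decoding

section Security

variable {A : Set ι}

lemma row_mem_rowSpace (G : Matrix ρ ι 𝕜) (r : ρ) : G r ∈ rowSpace 𝕜 G :=
  Submodule.subset_span ⟨r, rfl⟩

lemma rowSpace_submatrix_le (G : Matrix ρ ι 𝕜) (e : ρ' → ρ) :
    rowSpace 𝕜 (G.submatrix e id) ≤ rowSpace 𝕜 G :=
  Submodule.span_le.2 <| Set.range_subset_iff.2 fun r => row_mem_rowSpace G (e r)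

lemma WeaklySecure.mono {G : Matrix ρ ι 𝕜} {G' : Matrix ρ' ι 𝕜} (hs : WeaklySecure 𝕜 G A)
    (h : rowSpace 𝕜 G' ≤ rowSpace 𝕜 G) : WeaklySecure 𝕜 G' A :=
  fun i hi u hu hmem => hs i hi u hu (h hmem)

/-- Unlike `WeaklySecure`, this form mentions no `Pi.single`, whose classical `DecidableEq`
instance on a subtype would not match the one found by instance search. -/
lemma weaklySecure_iff {G : Matrix ρ ι 𝕜} :
    WeaklySecure 𝕜 G A ↔ ∀ v ∈ rowSpace 𝕜 G, ∀ i ∉ A, (∀ j ∉ A, j ≠ i → v j = 0) → v i ≠ 1 := by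
  refine ⟨fun hs v hv i hiA hvA hvi => ?_, fun h i hiA u hu hmem => ?_⟩
  · refine hs i hiA (v - Pi.single i 1) (fun j hj => ?_) (by rwa [sub_add_cancel])
    by_contra hjA
    rcases eq_or_ne j i with rfl | hji
    · simp [hvi] at hj
    · simp [hvA j hjA hji, hji] at hj
  · refine h _ hmem i hiA (fun j hjA hji => ?_) ?_
    · rw [Pi.add_apply, Pi.single_eq_of_ne hji, add_zero]
      exact not_not.1 fun hj => hjA (hu j hj)
    · rw [Pi.add_apply, Pi.single_eq_same, not_not.1 fun hi => hiA (hu i hi), zero_add]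

lemma WeaklySecure.of_extend {P : Set ι} {G : Matrix ρ ι 𝕜} (hs : WeaklySecure 𝕜 G A)
    {G' : Matrix ρ' ↥P 𝕜} (hrows : ∀ r, Function.extend Subtype.val (G' r) 0 ∈ rowSpace 𝕜 G) :
    WeaklySecure 𝕜 G' (Subtype.val ⁻¹' A) := by
  have hle : (rowSpace 𝕜 G').map (Function.ExtendByZero.linearMap 𝕜 Subtype.val) ≤
      rowSpace 𝕜 G := by
    rw [rowSpace, Submodule.map_span_le]
    rintro _ ⟨r, rfl⟩
    exact hrows r
  rw [weaklySecure_iff] at hs ⊢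
  intro v hv i hiA hvA
  have hext (j : ↥P) : Function.extend Subtype.val v 0 j = v j :=
    Subtype.val_injective.extend_apply _ _ j
  refine hext i ▸ hs _ (hle (Submodule.mem_map_of_mem hv)) i hiA fun j hjA hji => ?_
  by_cases hjP : j ∈ P
  · exact (hext ⟨j, hjP⟩).trans (hvA _ hjA fun h => hji (congrArg Subtype.val h))
  · exact extend_val_apply_of_notMem v hjP

lemma apply_ne_one_of_restrict {P : Set ι} {G : Matrix ρ ι 𝕜} {G' : Matrix ρ' ↥P 𝕜}
    (hs : WeaklySecure 𝕜 G' (Subtype.val ⁻¹' A))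
    (hrows : ∀ r, G r ∘ Subtype.val ∈ rowSpace 𝕜 G') {v : ι → 𝕜} (hv : v ∈ rowSpace 𝕜 G)
    {i : ι} (hiP : i ∈ P) (hiA : i ∉ A) (hvA : ∀ j ∉ A, j ≠ i → v j = 0) : v i ≠ 1 := by
  have hle : (rowSpace 𝕜 G).map (LinearMap.funLeft 𝕜 𝕜 (Subtype.val : ↥P → ι)) ≤
      rowSpace 𝕜 G' := by
    rw [rowSpace, Submodule.map_span_le]
    rintro _ ⟨r, rfl⟩
    exact hrows r
  exact weaklySecure_iff.1 hs _ (hle (Submodule.mem_map_of_mem hv)) ⟨i, hiP⟩ hiA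
    fun j hjA hji => hvA j hjA fun h => hji (Subtype.ext h)

end Security

section Block

variable {P1 P2 : Set ι} {G1 : Matrix ρ ↥P1 𝕜} {G2 : Matrix ρ' ↥P2 𝕜}

lemma twoSenderForm_fromRows_extendCols (hd : Disjoint P1 P2) :
    TwoSenderForm 𝕜 P1 P2 (fromRows (extendCols 𝕜 P1 G1) (extendCols 𝕜 P2 G2)) := by
  refine ⟨Set.range Sum.inl, ?_, ?_⟩
  · rintro _ ⟨r, rfl⟩ j hj
    exact extend_val_apply_of_notMem _ (Set.disjoint_right.1 hd hj)
  · rintro (r | r) hr j hj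
    · exact absurd ⟨r, rfl⟩ hr
    · exact extend_val_apply_of_notMem _ (Set.disjoint_left.1 hd hj)

lemma ValidCode.fromRows_extendCols [Fintype ι] {K : ι → Set ι} (hu : P1 ∪ P2 = Set.univ)
    (hv1 : ValidCode 𝕜 (subK K P1) G1) (hv2 : ValidCode 𝕜 (subK K P2) G2) :
    ValidCode 𝕜 K (fromRows (extendCols 𝕜 P1 G1) (extendCols 𝕜 P2 G2)) := by
  intro i
  rcases Set.eq_univ_iff_forall.1 hu i with hi | hi
  · exact (decodes_extendCols hv1 hi).of_mulVec_factor (· ∘ Sum.inl) fun x => by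
      rw [fromRows_mulVec, Sum.elim_comp_inl]
  · exact (decodes_extendCols hv2 hi).of_mulVec_factor (· ∘ Sum.inr) fun x => by
      rw [fromRows_mulVec, Sum.elim_comp_inr]

lemma WeaklySecure.fromRows_extendCols {A : Set ι} (hd : Disjoint P1 P2)
    (hu : P1 ∪ P2 = Set.univ) (hs1 : WeaklySecure 𝕜 G1 (Subtype.val ⁻¹' A))
    (hs2 : WeaklySecure 𝕜 G2 (Subtype.val ⁻¹' A)) :
    WeaklySecure 𝕜 (fromRows (extendCols 𝕜 P1 G1) (extendCols 𝕜 P2 G2)) A := by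
  refine weaklySecure_iff.2 fun v hv i hiA hvA => ?_
  rcases Set.eq_univ_iff_forall.1 hu i with hi | hi
  · refine apply_ne_one_of_restrict hs1 ?_ hv hi hiA hvA
    rintro (r | r)
    · exact (Function.extend_comp Subtype.val_injective _ _).symm ▸ row_mem_rowSpace G1 r
    · exact (extend_val_comp_val_of_disjoint hd.symm (G2 r)).symm ▸ zero_mem _
  · refine apply_ne_one_of_restrict hs2 ?_ hv hi hiA hvA
    rintro (r | r)
    · exact (extend_val_comp_val_of_disjoint hd (G1 r)).symm ▸ zero_mem _
    · exact (Function.extend_comp Subtype.val_injective _ _).symm ▸ row_mem_rowSpace G2 r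

end Block

section Lengths

variable [Fintype ι] {K : ι → Set ι} {A : Set ι}

lemma card_mem_oneLens [Fintype ρ] {G : Matrix ρ ι 𝕜} (hv : ValidCode 𝕜 K G)
    (hs : WeaklySecure 𝕜 G A) : Fintype.card ρ ∈ oneLens 𝕜 K A :=
  let e := (Fintype.equivFin ρ).symm
  ⟨G.submatrix e id, hv.submatrix_rows e e.injective fun r hr => (hr (e.surjective r)).elim,
    hs.mono (rowSpace_submatrix_le G e)⟩

lemma card_mem_twoLens [Fintype ρ] {P1 P2 : Set ι} {G : Matrix ρ ι 𝕜}
    (hG : TwoSenderForm 𝕜 P1 P2 G) (hv : ValidCode 𝕜 K G) (hs : WeaklySecure 𝕜 G A) :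
    Fintype.card ρ ∈ twoLens 𝕜 P1 P2 K A := by
  obtain ⟨S, hS1, hS2⟩ := hG
  let e := (Fintype.equivFin ρ).symm
  exact ⟨G.submatrix e id, ⟨e ⁻¹' S, fun r hr => hS1 (e r) hr, fun r hr => hS2 (e r) hr⟩,
    hv.submatrix_rows e e.injective fun r hr => (hr (e.surjective r)).elim,
    hs.mono (rowSpace_submatrix_le G e)⟩

lemma add_mem_twoLens {P1 P2 : Set ι} (hd : Disjoint P1 P2) (hu : P1 ∪ P2 = Set.univ)
    {l1 l2 : ℕ} (h1 : l1 ∈ oneLens 𝕜 (subK K P1) (Subtype.val ⁻¹' A))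
    (h2 : l2 ∈ oneLens 𝕜 (subK K P2) (Subtype.val ⁻¹' A)) :
    l1 + l2 ∈ twoLens 𝕜 P1 P2 K A := by
  obtain ⟨G1, hv1, hs1⟩ := h1
  obtain ⟨G2, hv2, hs2⟩ := h2
  simpa only [Fintype.card_sum, Fintype.card_fin] using
    card_mem_twoLens (twoSenderForm_fromRows_extendCols hd) (hv1.fromRows_extendCols hu hv2)
      (hs1.fromRows_extendCols hd hu hs2)

lemma card_mem_oneLens_of_rows [Fintype ρ] {P : Set ι} {G : Matrix ρ ι 𝕜} {S : Set ρ}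
    (hS : ∀ r ∈ S, ∀ j ∉ P, G r j = 0) (hSc : ∀ r ∉ S, ∀ j ∈ P, G r j = 0)
    (hv : ValidCode 𝕜 K G) (hs : WeaklySecure 𝕜 G A) :
    Fintype.card S ∈ oneLens 𝕜 (subK K P) (Subtype.val ⁻¹' A) := by
  refine card_mem_oneLens (G := G.submatrix (Subtype.val : S → ρ) (Subtype.val : ↥P → ι)) ?_ ?_
  · exact (hv.submatrix_cols_val P).submatrix_rows _ Subtype.val_injective
      fun r hr j => hSc r (by simpa using hr) j j.2
  · refine hs.of_extend fun r => ?_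
    rw [show G.submatrix Subtype.val Subtype.val r = G r ∘ Subtype.val from rfl,
      extend_val_comp_val (hS r r.2)]
    exact row_mem_rowSpace G r

open scoped Pointwise in
theorem twoLens_eq_add {P1 P2 : Set ι} (hd : Disjoint P1 P2) (hu : P1 ∪ P2 = Set.univ) :
    twoLens 𝕜 P1 P2 K A =
      oneLens 𝕜 (subK K P1) (Subtype.val ⁻¹' A) + oneLens 𝕜 (subK K P2) (Subtype.val ⁻¹' A) := by
  ext l
  refine ⟨?_, ?_⟩
  · rintro ⟨G, ⟨S, hS1, hS2⟩, hv, hs⟩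
    have hcover := Set.eq_univ_iff_forall.1 hu
    refine Set.mem_add.2 ⟨_, card_mem_oneLens_of_rows
      (fun r hr j hj => hS1 r hr j ((hcover j).resolve_left hj)) hS2 hv hs, _,
      card_mem_oneLens_of_rows (S := Sᶜ) (fun r hr j hj => hS2 r hr j ((hcover j).resolve_right hj))
        (fun r hr => hS1 r (not_not.1 hr)) hv hs, ?_⟩
    rw [Fintype.card_compl_set, Fintype.card_fin]
    have : Fintype.card ↥S ≤ l :=
      (Fintype.card_le_of_injective _ Subtype.val_injective).trans_eq (Fintype.card_fin l)
    omega
  · rintro ⟨l1, h1, l2, h2, rfl⟩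
    exact add_mem_twoLens hd hu h1 h2

end Lengths

open scoped Pointwise in
theorem Nat.sInf_add_of_nonempty {s t : Set ℕ} (hs : s.Nonempty) (ht : t.Nonempty) :
    sInf (s + t) = sInf s + sInf t := by
  refine le_antisymm (Nat.sInf_le (Set.add_mem_add (Nat.sInf_mem hs) (Nat.sInf_mem ht))) ?_
  obtain ⟨a, ha, b, hb, hab⟩ := Set.mem_add.1 (Nat.sInf_mem (hs.add ht))
  exact hab ▸ add_le_add (Nat.sInf_le ha) (Nat.sInf_le hb)

end

theorem opt_twoSender_eq_add_of_empty_common {m : ℕ}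
    (P1 P2 : Set (Fin m)) (hd : Disjoint P1 P2) (hu : P1 ∪ P2 = Set.univ)
    (K : Fin m → Set (Fin m))
    (A : Set (Fin m))
    (h1 : (oneLens F (subK K P1) (Subtype.val ⁻¹' A)).Nonempty)
    (h2 : (oneLens F (subK K P2) (Subtype.val ⁻¹' A)).Nonempty) :
    sInf (twoLens F P1 P2 K A) =
      sInf (oneLens F (subK K P1) (Subtype.val ⁻¹' A)) +
        sInf (oneLens F (subK K P2) (Subtype.val ⁻¹' A)) := by
  rw [twoLens_eq_add hd hu, Nat.sInf_add_of_nonempty h1 h2]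
end
end

section
/- Consider a two-sender instance over a finite field F with parts P_1, P_2, P_{12}, side-information sets K_i, and eavesdropper set A, and suppose the eavesdropper knows every common message: A ∩ P_{12} = P_{12}. Let the reduced instance be the two-sender instance on P_1 ∪ P_2 obtained by deleting the coordinates P_{12}: parts (P_1, P_2, ∅), side-information sets K_i ∩ (P_1 ∪ P_2) for i ∈ P_1 ∪ P_2, and eavesdropper set A ∩ (P_1 ∪ P_2). Then the optimal codelength of the reduced instance is at most that of the original instance: l*(reduced) ≤ l*(original). In particular, given any valid weakly secure two-sender code of the form whose sender-1 rows are (G_1 | 0 | G_{12}^1) and sender-2 rows are (0 | G_2 | G_{12}^2) on the column blocks (P_1, P_2, P_{12}), the block-diagonal matrix diag(G_1, G_2) is a valid weakly secure two-sender code for the reduced instance. -/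
/-! Deleting the columns outside `P1 ∪ P2` from a code keeps it a two-sender code, and keeps it
decodable by setting the deleted messages to zero. It also keeps it weakly secure, because the
eavesdropper knows every deleted message: a vector `u + e i` in the row space of the restricted code
lifts to a vector `v` in the row space of the original code, and `v - e i` is supported in `A`.
Hence every achievable length of the original instance is achievable for the reduced one. -/

open Matrix Sum

attribute [local instance] Classical.propDecidable

noncomputable section

variable (F : Type*) [Field F] [Fintype F]

section Restriction

variable {𝕜 ρ ι : Type*} [Field 𝕜] {S : Set ι}

lemma mulVec_submatrix_val [Fintype ι] [Fintype S] (G : Matrix ρ ι 𝕜) (x : S → 𝕜) :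
    G.submatrix id Subtype.val *ᵥ x = G *ᵥ Function.extend Subtype.val x 0 := by
  obtain rfl : ‹Fintype S› = Subtype.fintype _ := Subsingleton.elim _ _
  funext r
  simp only [mulVec, dotProduct, submatrix_apply, id]
  symm
  rw [← Fintype.sum_subtype_add_sum_subtype (· ∈ S),
    Fintype.sum_eq_zero (fun j : {j // j ∉ S} => G r j * Function.extend Subtype.val x 0 j)
      fun j => by rw [Function.extend_val_apply' j.2, Pi.zero_apply, mul_zero], add_zero]
  simp only [Subtype.val_injective.extend_apply]

lemma ValidCode.submatrix_val [Fintype ι] [Fintype S] {K : ι → Set ι} {G : Matrix ρ ι 𝕜}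
    (hG : ValidCode 𝕜 K G) : ValidCode 𝕜 (subK K S) (G.submatrix id Subtype.val) := by
  intro i
  obtain ⟨D, hD⟩ := hG i
  refine ⟨fun c s => D c fun j => if h : j.1 ∈ S then s ⟨⟨j, h⟩, j.2⟩ else 0, fun x => ?_⟩
  have hx := hD (Function.extend Subtype.val x 0)
  simp only [Subtype.val_injective.extend_apply] at hx
  rw [mulVec_submatrix_val, ← hx]
  dsimp only
  congr 1
  funext j
  split_ifs with h
  · exact (Function.extend_val_apply h).symm
  · rw [Function.extend_val_apply' h, Pi.zero_apply]

lemma rowSpace_submatrix_val (G : Matrix ρ ι 𝕜) :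
    rowSpace 𝕜 (G.submatrix id (Subtype.val : S → ι)) =
      (rowSpace 𝕜 G).map (LinearMap.funLeft 𝕜 𝕜 (Subtype.val : S → ι)) := by
  rw [rowSpace, rowSpace, Submodule.map_span, ← Set.range_comp]
  rfl

lemma WeaklySecure.submatrix_val {G : Matrix ρ ι 𝕜} {A : Set ι} (hG : WeaklySecure 𝕜 G A)
    (hSA : Sᶜ ⊆ A) :
    WeaklySecure 𝕜 (G.submatrix id (Subtype.val : S → ι)) (Subtype.val ⁻¹' A) := by
  intro i hi u hu hmem
  rw [rowSpace_submatrix_val, Submodule.mem_map] at hmem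
  obtain ⟨v, hv, hvu⟩ := hmem
  refine hG i hi (v - Pi.single i.1 1) (fun j hj => ?_) (by simpa using hv)
  by_cases hjS : j ∈ S
  · refine hu ⟨j, hjS⟩ ?_
    have hvj := congrFun hvu ⟨j, hjS⟩
    change v j = _ at hvj
    by_cases hji : j = i.1
    · subst hji; simpa [hvj] using hj
    · simpa [hvj, Pi.single_apply, Subtype.ext_iff, hji] using hj
  · exact hSA hjS

lemma TwoSenderForm.submatrix_val {P1 P2 : Set ι} {G : Matrix ρ ι 𝕜}
    (hG : TwoSenderForm 𝕜 P1 P2 G) :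
    TwoSenderForm 𝕜 (Subtype.val ⁻¹' P1 : Set S) (Subtype.val ⁻¹' P2)
      (G.submatrix id Subtype.val) :=
  let ⟨R, h1, h2⟩ := hG
  ⟨R, fun r hr j hj => h1 r hr j hj, fun r hr j hj => h2 r hr j hj⟩

lemma twoSenderForm_of_sum {ρ₁ ρ₂ : Type*} {P1 P2 : Set ι} (G : Matrix (ρ₁ ⊕ ρ₂) ι 𝕜)
    (h1 : ∀ r, ∀ j ∈ P2, G (inl r) j = 0) (h2 : ∀ r, ∀ j ∈ P1, G (inr r) j = 0) :
    TwoSenderForm 𝕜 P1 P2 G :=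
  ⟨Set.range inl, by rintro _ ⟨r, rfl⟩; exact h1 r, by
    rintro (r | r) hr
    · exact absurd ⟨r, rfl⟩ hr
    · exact h2 r⟩

lemma twoLens_subset_twoLens_restrict [Fintype ι] [Fintype S] {P1 P2 A : Set ι}
    {K : ι → Set ι} (hSA : Sᶜ ⊆ A) :
    twoLens 𝕜 P1 P2 K A ⊆ twoLens 𝕜 (Subtype.val ⁻¹' P1 : Set S) (Subtype.val ⁻¹' P2)
      (subK K S) (Subtype.val ⁻¹' A) := by
  rintro l ⟨G, hform, hval, hsec⟩
  exact ⟨_, hform.submatrix_val, hval.submatrix_val, hsec.submatrix_val hSA⟩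

end Restriction

theorem reduced_opt_le_of_eaves_knows_common {m : ℕ}
    (P1 P2 P12 : Set (Fin m))
    (hcov : P1 ∪ P2 ∪ P12 = Set.univ)
    (K : Fin m → Set (Fin m))
    (A : Set (Fin m)) (hA12 : P12 ⊆ A) :
    ((twoLens F P1 P2 K A).Nonempty →
      sInf (twoLens F (Subtype.val ⁻¹' P1 : Set ↥(P1 ∪ P2))
          (Subtype.val ⁻¹' P2) (subK K (P1 ∪ P2)) (Subtype.val ⁻¹' A)) ≤
        sInf (twoLens F P1 P2 K A)) ∧
    ∀ (l1 l2 : ℕ) (G : Matrix (Fin l1 ⊕ Fin l2) (Fin m) F),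
      (∀ r, ∀ j ∈ P2, G (Sum.inl r) j = 0) →
      (∀ r, ∀ j ∈ P1, G (Sum.inr r) j = 0) →
      ValidCode F K G → WeaklySecure F G A →
      TwoSenderForm F (Subtype.val ⁻¹' P1 : Set ↥(P1 ∪ P2)) (Subtype.val ⁻¹' P2)
          (Matrix.of fun r (j : ↥(P1 ∪ P2)) => G r j.1) ∧
        ValidCode F (subK K (P1 ∪ P2))
          (Matrix.of fun r (j : ↥(P1 ∪ P2)) => G r j.1) ∧
        WeaklySecure F (Matrix.of fun r (j : ↥(P1 ∪ P2)) => G r j.1)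
          (Subtype.val ⁻¹' A) := by
  have hcompl : (P1 ∪ P2)ᶜ ⊆ A := fun j hj =>
    hA12 <| (Set.eq_univ_iff_forall.mp hcov j).resolve_left hj
  refine ⟨fun hne => Nat.sInf_le (twoLens_subset_twoLens_restrict hcompl (Nat.sInf_mem hne)),
    fun l1 l2 G h1 h2 hval hsec => ?_⟩
  exact ⟨(twoSenderForm_of_sum G h1 h2).submatrix_val, hval.submatrix_val,
    hsec.submatrix_val hcompl⟩
end
end
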